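/- arXiv:2310.01895 — 3 statements merged into one kernel-verified Lean document; each statement's English description precedes it below -/
import Mathlib

section
/- Suppose the backward Riccati recursion Eₖ = AₖᵀE_{k+1}Aₖ + Qₖ − AₖᵀE_{k+1}Bₖ(Rₖ + BₖᵀE_{k+1}Bₖ)⁻¹BₖᵀE_{k+1}Aₖ holds with terminal condition E_K = Q_K, where each Qₖ is symmetric positive semidefinite and each Rₖ is symmetric positive definite. Then Eₖ is symmetric positive semidefinite for every k = 0,…,K, and in particular Yₖ = Rₖ + BₖᵀE_{k+1}Bₖ is positive definite at every step so the recursion is well defined. -/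
/-!
Write `Y = R + Bᵀ E' B` and `F = Y⁻¹ Bᵀ E' A` for the optimal feedback gain. Completing the
square turns one step of the recursion into
`E = (A - B F)ᵀ E' (A - B F) + Fᵀ R F + Q`,
a sum of congruences of positive semidefinite matrices, so positive semidefiniteness of `E'`
propagates to `E`; and `E' ⪰ 0` together with `R ≻ 0` gives `Y ≻ 0`, so `Y` is invertible.
Backward induction from `E_K = Q_K` finishes the proof.
-/

open Matrix

namespace Matrix

variable {n m p : Type*} [Fintype n] [Fintype m]

theorem conjTranspose_mul_mul_sub_eq_of_mul_eq {α : Type*} [Ring α] [StarRing α]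
    {A : Matrix n p α} {B : Matrix n m α} {E : Matrix n n α} {R : Matrix m m α}
    {F : Matrix m p α} (hF : (R + Bᴴ * E * B) * F = Bᴴ * E * A) :
    Aᴴ * E * A - Aᴴ * E * B * F = (A - B * F)ᴴ * E * (A - B * F) + Fᴴ * R * F := by
  have hFYF : Fᴴ * (R * F) + Fᴴ * (Bᴴ * (E * (B * F))) = Fᴴ * (Bᴴ * (E * A)) := by
    simpa only [Matrix.mul_add, Matrix.add_mul, Matrix.mul_assoc] using congrArg (Fᴴ * ·) hF
  simp only [conjTranspose_sub, conjTranspose_mul, Matrix.sub_mul, Matrix.mul_sub,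
    Matrix.mul_assoc]
  rw [← hFYF]
  abel

variable {K : Type*} [Field K] [StarRing K]

noncomputable def riccatiUpdate [DecidableEq m]
    (A : Matrix n p K) (B : Matrix n m K) (Q : Matrix p p K) (R : Matrix m m K)
    (E : Matrix n n K) : Matrix p p K :=
  Aᴴ * E * A + Q - Aᴴ * E * B * (R + Bᴴ * E * B)⁻¹ * (Bᴴ * E * A)

theorem riccatiUpdate_eq_completeSquare [DecidableEq m] {A : Matrix n p K} {B : Matrix n m K}
    {Q : Matrix p p K} {R : Matrix m m K} {E : Matrix n n K}
    (hY : IsUnit (R + Bᴴ * E * B).det) :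
    let F := (R + Bᴴ * E * B)⁻¹ * (Bᴴ * E * A)
    riccatiUpdate A B Q R E = (A - B * F)ᴴ * E * (A - B * F) + Fᴴ * R * F + Q := by
  intro F
  have hF : (R + Bᴴ * E * B) * F = Bᴴ * E * A := mul_nonsing_inv_cancel_left _ _ hY
  rw [riccatiUpdate, add_sub_right_comm, Matrix.mul_assoc _ _ (Bᴴ * E * A),
    conjTranspose_mul_mul_sub_eq_of_mul_eq hF]

variable [PartialOrder K] [AddLeftMono K]

theorem PosDef.add_conjTranspose_mul_mul_same {R : Matrix m m K} {E : Matrix n n K}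
    (hR : R.PosDef) (hE : E.PosSemidef) (B : Matrix n m K) : (R + Bᴴ * E * B).PosDef :=
  hR.add_posSemidef (hE.conjTranspose_mul_mul_same B)

theorem PosSemidef.riccatiUpdate [Finite p] [DecidableEq m] (A : Matrix n p K) (B : Matrix n m K)
    {Q : Matrix p p K} {R : Matrix m m K} {E : Matrix n n K}
    (hQ : Q.PosSemidef) (hR : R.PosDef) (hE : E.PosSemidef) :
    (riccatiUpdate A B Q R E).PosSemidef := by
  have hY := (hR.add_conjTranspose_mul_mul_same hE B).isUnit
  rw [riccatiUpdate_eq_completeSquare ((isUnit_iff_isUnit_det _).mp hY)]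
  exact ((hE.conjTranspose_mul_mul_same _).add
    (hR.posSemidef.conjTranspose_mul_mul_same _)).add hQ

end Matrix

theorem riccati_posSemidef {n m K : ℕ}
    (A : ℕ → Matrix (Fin n) (Fin n) ℝ) (B : ℕ → Matrix (Fin n) (Fin m) ℝ)
    (Q : ℕ → Matrix (Fin n) (Fin n) ℝ) (R : ℕ → Matrix (Fin m) (Fin m) ℝ)
    (E : ℕ → Matrix (Fin n) (Fin n) ℝ)
    (hQ : ∀ k ≤ K, (Q k).PosSemidef)
    (hR : ∀ k < K, (R k).PosDef)
    (hEK : E K = Q K)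
    (hric : ∀ k < K, E k = (A k)ᵀ * E (k+1) * A k + Q k -
      (A k)ᵀ * E (k+1) * B k * (R k + (B k)ᵀ * E (k+1) * B k)⁻¹ *
        ((B k)ᵀ * E (k+1) * A k)) :
    (∀ k ≤ K, (E k).PosSemidef) ∧
      (∀ k < K, (R k + (B k)ᵀ * E (k+1) * B k).PosDef) := by
  simp only [← conjTranspose_eq_transpose_of_trivial] at hric ⊢
  have hE : ∀ k ≤ K, (E k).PosSemidef := fun k hk ↦
    Nat.decreasingInduction (motive := fun k _ ↦ (E k).PosSemidef)
      (fun k hk hsucc ↦ hric k hk ▸ (hQ k hk.le).riccatiUpdate (A k) (B k) (hR k hk) hsucc)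
      (hEK ▸ hQ K le_rfl) hk
  exact ⟨hE, fun k hk ↦ (hR k hk).add_conjTranspose_mul_mul_same (hE (k + 1) hk) (B k)⟩
end

section
/- Equivalence of control representations: suppose λ_{k+1} = E_{k+1}x_{k+1} + e_{k+1}, the state satisfies x_{k+1} = Aₖxₖ + Bᵢuᵢ + η where η ∈ ℝⁿ, Y = Rᵢ + BᵢᵀE_{k+1}Bᵢ is invertible, Rᵢ is invertible, and b := Y⁻¹(Bᵢᵀ(E_{k+1}η + e_{k+1}) − Nᵢᵀμ). Then uᵢ = −Rᵢ⁻¹(Bᵢᵀλ_{k+1} − Nᵢᵀμ) holds if and only if uᵢ = −Y⁻¹BᵢᵀE_{k+1}Aₖxₖ − b. -/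
/-! Substituting the dynamics into the costate makes `Bᵢᵀ λ_{k+1} - Nᵢᵀ μ` affine in `uᵢ` with linear
part `Bᵢᵀ E_{k+1} Bᵢ`. Multiplying the first representation by `Rᵢ` and moving that term to the left
turns it into `Y uᵢ = -(Bᵢᵀ E_{k+1} Aₖ xₖ) - Y b`, which is the second representation multiplied by `Y`. -/

open Matrix

namespace Matrix

theorem mulVec_eq_neg_add_mulVec_iff {l n β : Type*} [Fintype n] [NonUnitalNonAssocRing β]
    (R K : Matrix l n β) (u : n → β) (d : l → β) :
    R *ᵥ u = -(K *ᵥ u + d) ↔ (R + K) *ᵥ u = -d := by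
  rw [add_mulVec, eq_neg_iff_add_eq_zero, eq_neg_iff_add_eq_zero, add_assoc]

theorem eq_neg_inv_mulVec_iff {m α : Type*} [Fintype m] [DecidableEq m] [CommRing α] {M : Matrix m m α} (hM : IsUnit M.det) {u v : m → α} :
    u = -(M⁻¹ *ᵥ v) ↔ M *ᵥ u = -v := by
  rw [← mulVec_neg]
  constructor
  · rintro rfl
    rw [mulVec_mulVec, mul_nonsing_inv _ hM, one_mulVec]
  · intro h
    rw [← h, mulVec_mulVec, nonsing_inv_mul _ hM, one_mulVec]

end Matrix

theorem control_representation_equivalence {n mi ci : ℕ}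
    (A E : Matrix (Fin n) (Fin n) ℝ) (Bi : Matrix (Fin n) (Fin mi) ℝ)
    (Ri : Matrix (Fin mi) (Fin mi) ℝ) (Ni : Matrix (Fin ci) (Fin mi) ℝ)
    (x x1 η e1 lam1 : Fin n → ℝ) (μ : Fin ci → ℝ) (ui : Fin mi → ℝ)
    (hRi : IsUnit Ri.det)
    (Y : Matrix (Fin mi) (Fin mi) ℝ) (hYdef : Y = Ri + Biᵀ * E * Bi)
    (hY : IsUnit Y.det)
    (hlam : lam1 = E *ᵥ x1 + e1)
    (hx : x1 = A *ᵥ x + Bi *ᵥ ui + η)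
    (b : Fin mi → ℝ)
    (hb : b = Y⁻¹ *ᵥ (Biᵀ *ᵥ (E *ᵥ η + e1) - Niᵀ *ᵥ μ)) :
    ui = -(Ri⁻¹ *ᵥ (Biᵀ *ᵥ lam1 - Niᵀ *ᵥ μ)) ↔
      ui = -((Y⁻¹ * Biᵀ * E * A) *ᵥ x) - b := by
  set c := Biᵀ *ᵥ (E *ᵥ η + e1) - Niᵀ *ᵥ μ
  have costate : Biᵀ *ᵥ lam1 - Niᵀ *ᵥ μ = (Biᵀ * E * Bi) *ᵥ ui + ((Biᵀ * E * A) *ᵥ x + c) := by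
    simp only [c, hlam, hx, mulVec_add, ← mulVec_mulVec]
    abel
  have feedback : -((Y⁻¹ * Biᵀ * E * A) *ᵥ x) - b = -(Y⁻¹ *ᵥ ((Biᵀ * E * A) *ᵥ x + c)) := by
    rw [hb, mulVec_add, neg_add, ← sub_eq_add_neg]
    simp only [mulVec_mulVec, Matrix.mul_assoc]
  rw [feedback, eq_neg_inv_mulVec_iff hY, eq_neg_inv_mulVec_iff hRi, costate,
    mulVec_eq_neg_add_mulVec_iff, hYdef]
end

section
/- One-step value-function identity (core of Theorem 1): let V(x) = ½xᵀEx + eᵀx + f and V⁺(x) = ½xᵀE⁺x + (e⁺)ᵀx + f⁺ with E, E⁺ symmetric, and let x⁺ = Ax + Bu + η. Assume Y := R + BᵀE⁺B is symmetric positive definite, and the recursions: E = AᵀE⁺A + Q − AᵀE⁺B Y⁻¹ BᵀE⁺A; Yb = Bᵀ(E⁺η + e⁺) − Nᵀμ; e = Aᵀe⁺ + AᵀE⁺η − AᵀE⁺Bb + p − Mᵀμ; f = f⁺ + ½ηᵀ(E⁺η + 2e⁺) + ½s − ½bᵀYb − μᵀ(α + r). Then V⁺(x⁺) − V(x) = −½(xᵀQx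 + 2pᵀx + uᵀRu + s) + ½(u + y)ᵀY(u + y) + μᵀ(Mx + Nu + α + r), where y = Y⁻¹BᵀE⁺Ax + b. -/
/-!
Write `x⁺ = z + B u` with `z = A x + η`. The equation for `b` says exactly that
`Y y = Bᵀ (E⁺ z + e⁺) - Nᵀ μ`, so expanding `V⁺` around `z` in the direction `B u` completes the
square in `u`: `V⁺(x⁺) = V⁺(z) - ½ yᵀ Y y - ½ uᵀ R u + ½ (u + y)ᵀ Y (u + y) + μᵀ N u`.
Substituting `y = Y⁻¹ Bᵀ E⁺ A x + b`, the remainder `V⁺(z) - ½ yᵀ Y y` is a quadratic function of `x`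
whose coefficients are the Riccati recursions for `E`, `e`, `f` without their `Q`, `p`, `M`, `s`,
`α`, `r` terms.
-/

open Matrix

variable {ι κ : Type*} [Fintype ι] [Fintype κ]

namespace Matrix.IsSymm

variable {R : Type*} [CommSemiring R] {S : Matrix ι ι R}

theorem dotProduct_mulVec_comm (hS : S.IsSymm) (v w : ι → R) :
    v ⬝ᵥ S *ᵥ w = w ⬝ᵥ S *ᵥ v := by
  rw [← dotProduct_transpose_mulVec, hS.eq]

theorem add_dotProduct_mulVec_add (hS : S.IsSymm) (v w : ι → R) :
    (v + w) ⬝ᵥ S *ᵥ (v + w) = v ⬝ᵥ S *ᵥ v + 2 * (w ⬝ᵥ S *ᵥ v) + w ⬝ᵥ S *ᵥ w := by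
  simp only [mulVec_add, dotProduct_add, add_dotProduct, hS.dotProduct_mulVec_comm v w]
  ring

theorem inv_mul_mulVec_add_dotProduct_mulVec {K : Type*} [Field K] [DecidableEq κ]
    {Y : Matrix κ κ K} (hY : Y.IsSymm) (hYdet : IsUnit Y.det) (G : Matrix κ ι K)
    (x : ι → K) (b : κ → K) :
    ((Y⁻¹ * G) *ᵥ x + b) ⬝ᵥ Y *ᵥ ((Y⁻¹ * G) *ᵥ x + b) =
      x ⬝ᵥ (Gᵀ * Y⁻¹ * G) *ᵥ x + 2 * (b ⬝ᵥ G *ᵥ x) + b ⬝ᵥ Y *ᵥ b := by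
  have hYK : Y *ᵥ ((Y⁻¹ * G) *ᵥ x) = G *ᵥ x := by
    rw [mulVec_mulVec, mul_nonsing_inv_cancel_left _ _ hYdet]
  have hKt : (Y⁻¹ * G)ᵀ = Gᵀ * Y⁻¹ := by rw [transpose_mul, hY.inv.eq]
  rw [hY.add_dotProduct_mulVec_add, hYK, dotProduct_comm, ← dotProduct_transpose_mulVec, hKt,
    mulVec_mulVec]

end Matrix.IsSymm

section QuadValue

variable {𝕜 : Type*} [Field 𝕜]

def quadValue (S : Matrix ι ι 𝕜) (q : ι → 𝕜) (k : 𝕜) (x : ι → 𝕜) : 𝕜 :=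
  1 / 2 * (x ⬝ᵥ S *ᵥ x) + q ⬝ᵥ x + k

variable {S : Matrix ι ι 𝕜} {q : ι → 𝕜} {k : 𝕜}

theorem quadValue_add [CharZero 𝕜] (hS : S.IsSymm) (z w : ι → 𝕜) :
    quadValue S q k (z + w) = quadValue S q k z + 1 / 2 * (w ⬝ᵥ S *ᵥ w) + w ⬝ᵥ (S *ᵥ z + q) := by
  simp only [quadValue, hS.add_dotProduct_mulVec_add, dotProduct_add, dotProduct_comm q w]
  ring

theorem quadValue_mulVec (A : Matrix ι κ 𝕜) (x : κ → 𝕜) :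
    quadValue S q k (A *ᵥ x) = quadValue (Aᵀ * S * A) (Aᵀ *ᵥ q) k x := by
  simp only [quadValue, ← mulVec_mulVec]
  rw [dotProduct_transpose_mulVec, dotProduct_comm (Aᵀ *ᵥ q), dotProduct_transpose_mulVec,
    dotProduct_comm (S *ᵥ A *ᵥ x)]

theorem quadValue_add_mulVec [CharZero 𝕜] {R Y : Matrix κ κ 𝕜} {B : Matrix ι κ 𝕜}
    {z : ι → 𝕜} {y w : κ → 𝕜} (hS : S.IsSymm) (hYdef : Y = R + Bᵀ * S * B) (hY : Y.IsSymm)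
    (hy : Y *ᵥ y = Bᵀ *ᵥ (S *ᵥ z + q) - w) (u : κ → 𝕜) :
    quadValue S q k (z + B *ᵥ u) =
      quadValue S q k z - 1 / 2 * (y ⬝ᵥ Y *ᵥ y) - 1 / 2 * (u ⬝ᵥ R *ᵥ u) +
        1 / 2 * ((u + y) ⬝ᵥ Y *ᵥ (u + y)) + u ⬝ᵥ w := by
  have hYu : u ⬝ᵥ Y *ᵥ u = u ⬝ᵥ R *ᵥ u + B *ᵥ u ⬝ᵥ S *ᵥ B *ᵥ u := by
    rw [hYdef, add_mulVec, dotProduct_add, ← mulVec_mulVec, ← mulVec_mulVec,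
      dotProduct_transpose_mulVec, dotProduct_comm (S *ᵥ _)]
  have hYy : y ⬝ᵥ Y *ᵥ u = B *ᵥ u ⬝ᵥ (S *ᵥ z + q) - u ⬝ᵥ w := by
    rw [← hY.dotProduct_mulVec_comm, hy, dotProduct_sub, dotProduct_transpose_mulVec,
      dotProduct_comm]
  rw [quadValue_add hS, hY.add_dotProduct_mulVec_add, hYu, hYy]
  ring

theorem quadValue_mulVec_add_sub_feedback [CharZero 𝕜] [DecidableEq κ] {ι' : Type*} [Fintype ι']
    {A : Matrix ι ι' 𝕜} {B : Matrix ι κ 𝕜} {Y : Matrix κ κ 𝕜} {x : ι' → 𝕜} {η : ι → 𝕜}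
    {y b : κ → 𝕜} (hS : S.IsSymm) (hY : Y.IsSymm) (hYdet : IsUnit Y.det)
    (hy : y = (Y⁻¹ * Bᵀ * S * A) *ᵥ x + b) :
    quadValue S q k (A *ᵥ x + η) - 1 / 2 * (y ⬝ᵥ Y *ᵥ y) =
      quadValue (Aᵀ * S * A - Aᵀ * S * B * Y⁻¹ * (Bᵀ * S * A))
        (Aᵀ *ᵥ q + Aᵀ *ᵥ (S *ᵥ η) - Aᵀ *ᵥ (S *ᵥ (B *ᵥ b)))
        (k + 1 / 2 * (η ⬝ᵥ (S *ᵥ η + (2 : 𝕜) • q)) - 1 / 2 * (b ⬝ᵥ Y *ᵥ b)) x := by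
  have hG : Aᵀ * S * B = (Bᵀ * S * A)ᵀ := by simp [transpose_mul, hS.eq, Matrix.mul_assoc]
  rw [hy, Matrix.mul_assoc, Matrix.mul_assoc, ← Matrix.mul_assoc Bᵀ,
    hY.inv_mul_mulVec_add_dotProduct_mulVec hYdet, hG, quadValue_add hS, quadValue_mulVec]
  have hpull : ∀ v, Aᵀ *ᵥ S *ᵥ v ⬝ᵥ x = v ⬝ᵥ S *ᵥ A *ᵥ x := fun v ↦ by
    rw [dotProduct_comm, dotProduct_transpose_mulVec, ← hS.dotProduct_mulVec_comm, dotProduct_comm]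
  have hBb : b ⬝ᵥ (Bᵀ * S * A) *ᵥ x = B *ᵥ b ⬝ᵥ S *ᵥ A *ᵥ x := by
    rw [← mulVec_mulVec, ← mulVec_mulVec, dotProduct_transpose_mulVec, dotProduct_comm]
  simp only [quadValue, sub_mulVec, dotProduct_sub, sub_dotProduct, add_dotProduct, dotProduct_add,
    dotProduct_smul, smul_eq_mul, hpull, hBb]
  ring

end QuadValue

theorem one_step_value_identity_general {n m c : ℕ}
    (A Q E Ep : Matrix (Fin n) (Fin n) ℝ)
    (B : Matrix (Fin n) (Fin m) ℝ) (R : Matrix (Fin m) (Fin m) ℝ)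
    (M : Matrix (Fin c) (Fin n) ℝ) (N : Matrix (Fin c) (Fin m) ℝ)
    (x x1 η e ep p : Fin n → ℝ) (u b y : Fin m → ℝ)
    (μ α r : Fin c → ℝ) (f fp s : ℝ)
    (hEp : Ep.IsSymm)
    (Y : Matrix (Fin m) (Fin m) ℝ) (hYdef : Y = R + Bᵀ * Ep * B)
    (hY : Y.PosDef)
    (hric : E = Aᵀ * Ep * A + Q - Aᵀ * Ep * B * Y⁻¹ * (Bᵀ * Ep * A))
    (hb : Y *ᵥ b = Bᵀ *ᵥ (Ep *ᵥ η + ep) - Nᵀ *ᵥ μ)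
    (he : e = Aᵀ *ᵥ ep + Aᵀ *ᵥ (Ep *ᵥ η) - Aᵀ *ᵥ (Ep *ᵥ (B *ᵥ b)) + p - Mᵀ *ᵥ μ)
    (hf : f = fp + (1/2 : ℝ) * (η ⬝ᵥ (Ep *ᵥ η + (2 : ℝ) • ep)) + (1/2 : ℝ) * s -
      (1/2 : ℝ) * (b ⬝ᵥ (Y *ᵥ b)) - μ ⬝ᵥ (α + r))
    (hx1 : x1 = A *ᵥ x + B *ᵥ u + η)
    (hy : y = (Y⁻¹ * Bᵀ * Ep * A) *ᵥ x + b) :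
    ((1/2 : ℝ) * (x1 ⬝ᵥ (Ep *ᵥ x1)) + ep ⬝ᵥ x1 + fp) -
      ((1/2 : ℝ) * (x ⬝ᵥ (E *ᵥ x)) + e ⬝ᵥ x + f) =
    -(1/2 : ℝ) * (x ⬝ᵥ (Q *ᵥ x) + 2 * (p ⬝ᵥ x) + u ⬝ᵥ (R *ᵥ u) + s) +
      (1/2 : ℝ) * ((u + y) ⬝ᵥ (Y *ᵥ (u + y))) +
      μ ⬝ᵥ (M *ᵥ x + N *ᵥ u + α + r) := by
  have hYs : Y.IsSymm := isHermitian_iff_isSymm.mp hY.isHermitian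
  have hYdet : IsUnit Y.det := (isUnit_iff_isUnit_det Y).mp hY.isUnit
  have hYy : Y *ᵥ y = Bᵀ *ᵥ (Ep *ᵥ (A *ᵥ x + η) + ep) - Nᵀ *ᵥ μ := by
    rw [hy, mulVec_add, hb, mulVec_mulVec, Matrix.mul_assoc, Matrix.mul_assoc,
      mul_nonsing_inv_cancel_left _ _ hYdet, ← mulVec_mulVec, ← mulVec_mulVec]
    simp only [mulVec_add]
    abel
  change quadValue Ep ep fp x1 - quadValue E e f x = _
  rw [hx1, add_right_comm, quadValue_add_mulVec hEp hYdef hYs hYy,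
    quadValue_mulVec_add_sub_feedback hEp hYs hYdet hy]
  subst hric he hf
  simp only [quadValue, sub_mulVec, add_mulVec, dotProduct_add, dotProduct_sub, add_dotProduct,
    sub_dotProduct, dotProduct_comm (Mᵀ *ᵥ μ), dotProduct_transpose_mulVec]
  ring

theorem one_step_value_identity {n m c : ℕ}
    (A Q E Ep : Matrix (Fin n) (Fin n) ℝ)
    (B : Matrix (Fin n) (Fin m) ℝ) (R : Matrix (Fin m) (Fin m) ℝ)
    (M : Matrix (Fin c) (Fin n) ℝ) (N : Matrix (Fin c) (Fin m) ℝ)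
    (x x1 η e ep p : Fin n → ℝ) (u b y : Fin m → ℝ)
    (μ α r : Fin c → ℝ) (f fp s : ℝ)
    (hQ : Q.IsSymm) (hE : E.IsSymm) (hEp : Ep.IsSymm) (hR : R.IsSymm)
    (Y : Matrix (Fin m) (Fin m) ℝ) (hYdef : Y = R + Bᵀ * Ep * B)
    (hY : Y.PosDef)
    (hric : E = Aᵀ * Ep * A + Q - Aᵀ * Ep * B * Y⁻¹ * (Bᵀ * Ep * A))
    (hb : Y *ᵥ b = Bᵀ *ᵥ (Ep *ᵥ η + ep) - Nᵀ *ᵥ μ)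
    (he : e = Aᵀ *ᵥ ep + Aᵀ *ᵥ (Ep *ᵥ η) - Aᵀ *ᵥ (Ep *ᵥ (B *ᵥ b)) + p - Mᵀ *ᵥ μ)
    (hf : f = fp + (1/2 : ℝ) * (η ⬝ᵥ (Ep *ᵥ η + (2 : ℝ) • ep)) + (1/2 : ℝ) * s -
      (1/2 : ℝ) * (b ⬝ᵥ (Y *ᵥ b)) - μ ⬝ᵥ (α + r))
    (hx1 : x1 = A *ᵥ x + B *ᵥ u + η)
    (hy : y = (Y⁻¹ * Bᵀ * Ep * A) *ᵥ x + b) :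
    ((1/2 : ℝ) * (x1 ⬝ᵥ (Ep *ᵥ x1)) + ep ⬝ᵥ x1 + fp) -
      ((1/2 : ℝ) * (x ⬝ᵥ (E *ᵥ x)) + e ⬝ᵥ x + f) =
    -(1/2 : ℝ) * (x ⬝ᵥ (Q *ᵥ x) + 2 * (p ⬝ᵥ x) + u ⬝ᵥ (R *ᵥ u) + s) +
      (1/2 : ℝ) * ((u + y) ⬝ᵥ (Y *ᵥ (u + y))) +
      μ ⬝ᵥ (M *ᵥ x + N *ᵥ u + α + r) :=
  one_step_value_identity_general A Q E Ep B R M N x x1 η e ep p u b y μ α r f fp s hEp Y hYdef hY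
    hric hb he hf hx1 hy
end
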